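/- Consider a δ-ISS expert closed-loop system with linear gain γ(x) = γ·x (γ > 0) and η = ∞, and policies π, π⋆ satisfying the first-order Taylor assumption with constant L_{∂π}, with γ L_{∂π} ≥ 1. If max_{0≤t≤T−1} ‖∂_x Δ_t^{π⋆}(ξ;π)‖ ≤ 1/(4γ) and max_{0≤t≤T−1} ‖Δ_t^{π⋆}(ξ;π)‖ ≤ 1/(16 γ² L_{∂π}), then for all 0 ≤ t ≤ T, ‖x_t^{π⋆}(ξ) − x_t^π(ξ)‖ ≤ 8γ max_{0≤k≤t−1} ‖Δ_k^{π⋆}(ξ;π)‖. -/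
import Mathlib


open scoped BigOperators

/-- Closed-loop trajectory of `x_{t+1} = f(x_t, π(x_t) + Δ_t)` from initial condition `ξ`. -/
noncomputable def traj {d m : ℕ}
    (f : EuclideanSpace ℝ (Fin d) → EuclideanSpace ℝ (Fin m) → EuclideanSpace ℝ (Fin d))
    (π : EuclideanSpace ℝ (Fin d) → EuclideanSpace ℝ (Fin m))
    (Δ : ℕ → EuclideanSpace ℝ (Fin m)) (ξ : EuclideanSpace ℝ (Fin d)) :
    ℕ → EuclideanSpace ℝ (Fin d)
  | 0 => ξ
  | t + 1 => f (traj f π Δ ξ t) (π (traj f π Δ ξ t) + Δ t)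

/-- Class-K function: continuous, strictly increasing on `[0,∞)`, vanishing at `0`. -/
def ClassK (γ : ℝ → ℝ) : Prop :=
  ContinuousOn γ (Set.Ici 0) ∧ StrictMonoOn γ (Set.Ici 0) ∧ γ 0 = 0

/-- Class-KL function. -/
def ClassKL (β : ℝ → ℕ → ℝ) : Prop :=
  (∀ t, ClassK fun s => β s t) ∧ ∀ s, 0 ≤ s → Antitone fun t => β s t

set_option maxHeartbeats 1000000 in
/-- Corollary (r = 1 case) of TaSIL: δ-ISS expert with linear gain `γ(x) = g·x` and
`η = ∞` (no restriction on the perturbations), first-order Taylor assumption with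
constant `L`, `g·L ≥ 1`.  `Δ t` is the policy discrepancy along the expert trajectory. -/
theorem stmt6 {d m : ℕ} (T : ℕ) (g L : ℝ)
    (f : EuclideanSpace ℝ (Fin d) → EuclideanSpace ℝ (Fin m) → EuclideanSpace ℝ (Fin d))
    (πs π : EuclideanSpace ℝ (Fin d) → EuclideanSpace ℝ (Fin m))
    (ξ : EuclideanSpace ℝ (Fin d)) (β : ℝ → ℕ → ℝ)
    (hg : 0 < g) (hL : 0 < L) (hgL : 1 ≤ g * L)
    (hβ : ClassKL β)
    (hISS : ∀ (ξ₁ ξ₂ : EuclideanSpace ℝ (Fin d)) (Δ : ℕ → EuclideanSpace ℝ (Fin m)),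
      ∀ t, ∀ ht : 0 < t,
        ‖traj f πs Δ ξ₁ t - traj f πs (fun _ => 0) ξ₂ t‖ ≤
          β ‖ξ₁ - ξ₂‖ t +
            g * ((Finset.range t).sup' (Finset.nonempty_range_iff.mpr ht.ne') fun k => ‖Δ k‖))
    (hdiff : Differentiable ℝ π) (hdiff' : Differentiable ℝ πs)
    (hTaylor : ∀ πb ∈ ({π, πs} :
        Set (EuclideanSpace ℝ (Fin d) → EuclideanSpace ℝ (Fin m))),
      ∀ x x₀ : EuclideanSpace ℝ (Fin d),
        ‖πb x - πb x₀ - fderiv ℝ πb x₀ (x - x₀)‖ ≤ L / 2 * ‖x - x₀‖ ^ 2)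
    (Δ : ℕ → EuclideanSpace ℝ (Fin m))
    (hΔdef : ∀ t, Δ t =
      π (traj f πs (fun _ => 0) ξ t) - πs (traj f πs (fun _ => 0) ξ t))
    (hcondJ : ∀ t < T,
      ‖fderiv ℝ π (traj f πs (fun _ => 0) ξ t) -
        fderiv ℝ πs (traj f πs (fun _ => 0) ξ t)‖ ≤ 1 / (4 * g))
    (hcondΔ : ∀ t < T, ‖Δ t‖ ≤ 1 / (16 * g ^ 2 * L)) :
    ∀ t, ∀ ht : 1 ≤ t, t ≤ T →
      ‖traj f πs (fun _ => 0) ξ t - traj f π (fun _ => 0) ξ t‖ ≤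
        8 * g * (Finset.range t).sup' (Finset.nonempty_range_iff.mpr (by omega))
          fun k => ‖Δ k‖ := by

  have hX : ∀ s, traj f πs (fun _ => 0) ξ s = traj f πs (fun _ => 0) ξ s := fun _ => rfl
  set X : ℕ → EuclideanSpace ℝ (Fin d) := traj f πs (fun _ => 0) ξ with hXdef
  set Y : ℕ → EuclideanSpace ℝ (Fin d) := traj f π (fun _ => 0) ξ with hYdef
  set Δ' : ℕ → EuclideanSpace ℝ (Fin m) := fun t => π (Y t) - πs (Y t) with hΔ'def
  have hA : ∀ s, traj f πs Δ' ξ s = Y s := by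
    intro s
    induction s with
    | zero => rfl
    | succ n ih =>
      show f (traj f πs Δ' ξ n) (πs (traj f πs Δ' ξ n) + Δ' n)
          = f (traj f π (fun _ => 0) ξ n) (π (traj f π (fun _ => 0) ξ n) + 0)
      rw [ih, add_zero]
      show f (Y n) (πs (Y n) + (π (Y n) - πs (Y n))) = f (Y n) (π (Y n))
      congr 1
      rw [add_comm, sub_add_cancel]
  -- Taylor-based bound on Δ'
  have hC : ∀ k, k < T → ‖Δ' k‖ ≤ ‖Δ k‖ + (1/(4*g)) * ‖X k - Y k‖ + L * ‖X k - Y k‖^2 := by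
    intro k hk
    have hTπ := hTaylor π (by simp) (Y k) (X k)
    have hTπs := hTaylor πs (by simp) (Y k) (X k)
    set J := fderiv ℝ π (X k) - fderiv ℝ πs (X k) with hJ
    have hid : Δ' k = Δ k + J (Y k - X k)
        + (π (Y k) - π (X k) - fderiv ℝ π (X k) (Y k - X k))
        - (πs (Y k) - πs (X k) - fderiv ℝ πs (X k) (Y k - X k)) := by
      rw [hΔdef k, hJ, ContinuousLinearMap.sub_apply]
      show π (Y k) - πs (Y k) = _
      abel
    have hJb : ‖J (Y k - X k)‖ ≤ (1/(4*g)) * ‖Y k - X k‖ := by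
      calc ‖J (Y k - X k)‖ ≤ ‖J‖ * ‖Y k - X k‖ := J.le_opNorm _
        _ ≤ (1/(4*g)) * ‖Y k - X k‖ :=
          mul_le_mul_of_nonneg_right (hcondJ k hk) (norm_nonneg _)
    have hnorm : ‖Y k - X k‖ = ‖X k - Y k‖ := norm_sub_rev _ _
    calc ‖Δ' k‖ ≤ ‖Δ k + J (Y k - X k)
        + (π (Y k) - π (X k) - fderiv ℝ π (X k) (Y k - X k))‖
        + ‖πs (Y k) - πs (X k) - fderiv ℝ πs (X k) (Y k - X k)‖ := by
          rw [hid]; exact norm_sub_le _ _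
      _ ≤ ‖Δ k‖ + ‖J (Y k - X k)‖
        + ‖π (Y k) - π (X k) - fderiv ℝ π (X k) (Y k - X k)‖
        + ‖πs (Y k) - πs (X k) - fderiv ℝ πs (X k) (Y k - X k)‖ := by
          have := norm_add₃_le (a := Δ k) (b := J (Y k - X k))
            (c := π (Y k) - π (X k) - fderiv ℝ π (X k) (Y k - X k))
          linarith
      _ ≤ ‖Δ k‖ + (1/(4*g)) * ‖X k - Y k‖ + L * ‖X k - Y k‖^2 := by
          rw [hnorm] at hJb hTπ hTπs
          linarith
  have key : ∀ t, t ≤ T → ∀ ht0 : 0 < t,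
      ‖X t - Y t‖ ≤ 8 * g * ((Finset.range t).sup'
        (Finset.nonempty_range_iff.mpr ht0.ne') fun k => ‖Δ k‖) := by
    intro t
    induction t using Nat.strong_induction_on with
    | _ t ih =>
      intro htT ht0
      set M := (Finset.range t).sup' (Finset.nonempty_range_iff.mpr ht0.ne')
        (fun k => ‖Δ k‖) with hM
      have hM0 : 0 ≤ M :=
        le_trans (norm_nonneg (Δ 0)) (Finset.le_sup' (fun k => ‖Δ k‖) (Finset.mem_range.mpr ht0))
      have hMsmall : M ≤ 1/(16*g^2*L) :=
        Finset.sup'_le _ _ fun k hk =>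
          hcondΔ k (lt_of_lt_of_le (Finset.mem_range.mp hk) htT)
      have hek : ∀ k, k < t → ‖X k - Y k‖ ≤ 8 * g * M := by
        intro k hk
        rcases Nat.eq_zero_or_pos k with h0 | hpos
        · subst h0
          have : X 0 - Y 0 = 0 := by show ξ - ξ = 0; exact sub_self ξ
          rw [this, norm_zero]
          positivity
        · have hkT : k ≤ T := le_trans hk.le htT
          have h1 := ih k hk hkT hpos
          have hsub : ((Finset.range k).sup'
              (Finset.nonempty_range_iff.mpr hpos.ne') fun j => ‖Δ j‖) ≤ M := by
            refine Finset.sup'_le _ _ fun j hj => ?_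
            exact Finset.le_sup' (f := fun j => ‖Δ j‖)
              (Finset.mem_range.mpr (lt_trans (Finset.mem_range.mp hj) hk))
          have h8g : (0:ℝ) ≤ 8 * g := by positivity
          nlinarith
      have hΔ'bd : ∀ k, k < t → ‖Δ' k‖ ≤ 7 * M := by
        intro k hk
        have h1 := hC k (lt_of_lt_of_le hk htT)
        have h2 := hek k hk
        have h3 : ‖Δ k‖ ≤ M := Finset.le_sup' (fun j => ‖Δ j‖) (Finset.mem_range.mpr hk)
        have hn0 : (0:ℝ) ≤ ‖X k - Y k‖ := norm_nonneg _
        have h5 : (1/(4*g)) * ‖X k - Y k‖ ≤ 2 * M := by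
          have : (1/(4*g)) * ‖X k - Y k‖ ≤ (1/(4*g)) * (8*g*M) :=
            mul_le_mul_of_nonneg_left h2 (by positivity)
          have heq : (1/(4*g)) * (8*g*M) = 2 * M := by field_simp; ring
          linarith [heq ▸ this]
        have h4 : L * ‖X k - Y k‖^2 ≤ 4 * M := by
          have hsq : ‖X k - Y k‖^2 ≤ (8*g*M)^2 := by nlinarith
          have hstep : L * ‖X k - Y k‖^2 ≤ 64 * (g^2*L) * M * M := by nlinarith
          have hstep2 : 64 * (g^2*L) * M * M ≤ 64 * (g^2*L) * M * (1/(16*g^2*L)) := by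
            have : (0:ℝ) ≤ 64 * (g^2*L) * M := by positivity
            exact mul_le_mul_of_nonneg_left hMsmall this
          have heq : 64 * (g^2*L) * M * (1/(16*g^2*L)) = 4 * M := by
            field_simp; ring
          linarith
        linarith
      have hiss := hISS ξ ξ Δ' t ht0
      rw [hA t] at hiss
      have hβ0 : β ‖ξ - ξ‖ t = 0 := by
        rw [sub_self, norm_zero]; exact (hβ.1 t).2.2
      have hsup : ((Finset.range t).sup' (Finset.nonempty_range_iff.mpr ht0.ne')
          fun k => ‖Δ' k‖) ≤ 7 * M :=
        Finset.sup'_le _ _ fun k hk => hΔ'bd k (Finset.mem_range.mp hk)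
      rw [norm_sub_rev, hβ0, zero_add] at hiss
      have : g * ((Finset.range t).sup' (Finset.nonempty_range_iff.mpr ht0.ne')
          fun k => ‖Δ' k‖) ≤ g * (7 * M) :=
        mul_le_mul_of_nonneg_left hsup hg.le
      have hgM : (0:ℝ) ≤ g * M := mul_nonneg hg.le hM0
      calc ‖X t - Y t‖ ≤ g * (7 * M) := le_trans hiss this
        _ = 7 * (g * M) := by ring
        _ ≤ 8 * (g * M) := by linarith
        _ = 8 * g * M := by ring
  intro t ht htT
  exact key t htT ht
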